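/- arXiv:1307.4034 — 2 statements merged into one kernel-verified Lean document; each statement's English description precedes it below -/
import Mathlib

section
/- For every k ∈ ℤ² \ {0}, the sum over pairs of nonzero m, n ∈ ℤ² with m + n = k of |m·n|/(|m|² |n|²) diverges to infinity. -/
open scoped ENNReal

/-!
If `m + n = k` and `|m| ≥ 2|k|`, then `m·n = m·k - |m|²` has absolute value at least `|m|²/2`
while `|n| ≤ 3|m|/2`, so the summand is at least `2/(9|m|²)`. In the sector `0 ≤ m₂ < m₁`
with `m₁ > 2|k|`, the column over `m₁` holds `m₁` points with `|m|² ≤ 2m₁²`, contributing at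
least `1/(9m₁)`; summing over `m₁` gives a tail of the harmonic series.
-/

/-- Euclidean norm of a lattice point in `ℤ²`. -/
noncomputable def latNorm (m : ℤ × ℤ) : ℝ :=
  Real.sqrt ((m.1 : ℝ)^2 + (m.2 : ℝ)^2)

/-- Inner product of two lattice points in `ℤ²`, as a real number. -/
def latDot (m n : ℤ × ℤ) : ℝ := (m.1 : ℝ) * n.1 + (m.2 : ℝ) * n.2

open scoped RealInnerProductSpace

theorem two_div_le_abs_inner_div_norm_sq_mul_norm_sq {E : Type*} [NormedAddCommGroup E]
    [InnerProductSpace ℝ E] {m n : E} (hm : m ≠ 0) (h : 2 * ‖m + n‖ ≤ ‖m‖) :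
    2 / (9 * ‖m‖ ^ 2) ≤ |⟪m, n⟫| / (‖m‖ ^ 2 * ‖n‖ ^ 2) := by
  have hm0 : 0 < ‖m‖ := norm_pos_iff.2 hm
  have hinner : ‖m‖ ^ 2 / 2 ≤ |⟪m, n⟫| := by
    have hmk : ⟪m, m + n⟫ ≤ ‖m‖ * ‖m + n‖ := real_inner_le_norm _ _
    have hsplit : ⟪m, n⟫ = ⟪m, m + n⟫ - ‖m‖ ^ 2 := by
      rw [inner_add_right, real_inner_self_eq_norm_sq]; ring
    rw [hsplit, abs_sub_comm]
    nlinarith [le_abs_self (‖m‖ ^ 2 - ⟪m, m + n⟫)]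
  have hn_le : ‖n‖ ≤ 3 / 2 * ‖m‖ := by
    calc ‖n‖ = ‖(m + n) - m‖ := by rw [add_sub_cancel_left]
      _ ≤ ‖m + n‖ + ‖m‖ := norm_sub_le _ _
      _ ≤ 3 / 2 * ‖m‖ := by linarith
  have hn0 : 0 < ‖n‖ := by
    nlinarith [abs_real_inner_le_norm m n]
  calc 2 / (9 * ‖m‖ ^ 2) = (‖m‖ ^ 2 / 2) / (‖m‖ ^ 2 * (3 / 2 * ‖m‖) ^ 2) := by
        field_simp; norm_num
    _ ≤ |⟪m, n⟫| / (‖m‖ ^ 2 * ‖n‖ ^ 2) := by gcongr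

theorem ENNReal.tsum_ofReal_div_natCast_add_eq_top {c : ℝ} (hc : 0 < c) (L : ℕ) :
    ∑' i : ℕ, ENNReal.ofReal (c / ((i + L : ℕ) : ℝ)) = ∞ := by
  by_contra h
  have hsum : Summable fun i : ℕ => c / ((i + L : ℕ) : ℝ) :=
    (ENNReal.summable_toReal h).congr fun i => ENNReal.toReal_ofReal (by positivity)
  have hinv : Summable fun n : ℕ => c⁻¹ * (c / n) :=
    ((summable_nat_add_iff (f := fun n : ℕ => c / n) L).1 hsum).mul_left c⁻¹
  exact Real.not_summable_natCast_inv (hinv.congr fun n => by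
    rw [div_eq_mul_inv, inv_mul_cancel_left₀ hc.ne'])

noncomputable def latToEuclidean : ℤ × ℤ →+ EuclideanSpace ℝ (Fin 2) where
  toFun m := !₂[m.1, m.2]
  map_zero' := by ext i; fin_cases i <;> simp
  map_add' m n := by ext i; fin_cases i <;> simp

lemma latNorm_eq_norm (m : ℤ × ℤ) : latNorm m = ‖latToEuclidean m‖ := by
  simp [latNorm, latToEuclidean, EuclideanSpace.norm_eq, Fin.sum_univ_two]

lemma latDot_eq_inner (m n : ℤ × ℤ) : latDot m n = ⟪latToEuclidean m, latToEuclidean n⟫ := by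
  simp only [latDot, latToEuclidean, AddMonoidHom.coe_mk, ZeroHom.coe_mk, PiLp.inner_apply,
    Fin.sum_univ_two]
  simp [mul_comm]

lemma latNorm_sq (m : ℤ × ℤ) : latNorm m ^ 2 = (m.1 : ℝ) ^ 2 + (m.2 : ℝ) ^ 2 :=
  Real.sq_sqrt (by positivity)

lemma latNorm_nonneg (m : ℤ × ℤ) : 0 ≤ latNorm m := Real.sqrt_nonneg _

lemma abs_fst_le_latNorm (m : ℤ × ℤ) : |(m.1 : ℝ)| ≤ latNorm m :=
  Real.abs_le_sqrt (by nlinarith [sq_nonneg (m.2 : ℝ)])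

noncomputable def interactionWeight (m n : ℤ × ℤ) : ℝ :=
  |latDot m n| / (latNorm m ^ 2 * latNorm n ^ 2)

section FarModes

variable {k m : ℤ × ℤ} (h : 2 * latNorm k < latNorm m)
include h

lemma ne_zero_and_sub_ne_zero_of_two_latNorm_lt : m ≠ 0 ∧ k - m ≠ 0 := by
  have hk : 0 ≤ latNorm k := latNorm_nonneg _
  refine ⟨fun hm => ?_, fun hkm => ?_⟩
  · rw [hm, show latNorm 0 = 0 by simp [latNorm]] at h
    linarith
  · obtain rfl := sub_eq_zero.1 hkm
    linarith

lemma two_div_le_interactionWeight_of_two_latNorm_lt :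
    2 / (9 * latNorm m ^ 2) ≤ interactionWeight m (k - m) := by
  have hk : 0 ≤ latNorm k := latNorm_nonneg _
  simp only [latNorm_eq_norm] at h hk
  have hm : latToEuclidean m ≠ 0 := norm_pos_iff.1 (by linarith)
  have := two_div_le_abs_inner_div_norm_sq_mul_norm_sq (n := latToEuclidean (k - m)) hm
    (by rw [← map_add, add_sub_cancel]; exact h.le)
  simpa only [interactionWeight, latNorm_eq_norm, latDot_eq_inner] using this

end FarModes

lemma lt_latNorm_of_lt_fst {r : ℝ} {m : ℤ × ℤ} (h : r < m.1) : r < latNorm m :=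
  h.trans_le ((le_abs_self _).trans (abs_fst_le_latNorm m))

lemma inv_nine_mul_sq_le_interactionWeight {k m : ℤ × ℤ} (hk : 2 * latNorm k < m.1)
    (h0 : 0 ≤ m.2) (h1 : m.2 < m.1) : 1 / (9 * (m.1 : ℝ) ^ 2) ≤ interactionWeight m (k - m) := by
  have hfar : 2 * latNorm k < latNorm m := lt_latNorm_of_lt_fst hk
  have hm : 0 < latNorm m := by linarith [latNorm_nonneg k]
  have hsq : latNorm m ^ 2 ≤ 2 * (m.1 : ℝ) ^ 2 := by
    have h0' : (0 : ℝ) ≤ m.2 := by exact_mod_cast h0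
    have h1' : (m.2 : ℝ) < m.1 := by exact_mod_cast h1
    rw [latNorm_sq]; nlinarith
  have hm1 : (0 : ℝ) < m.1 := by linarith [latNorm_nonneg k]
  calc 1 / (9 * (m.1 : ℝ) ^ 2) = 2 / (9 * (2 * (m.1 : ℝ) ^ 2)) := by field_simp
    _ ≤ 2 / (9 * latNorm m ^ 2) := by gcongr
    _ ≤ interactionWeight m (k - m) := two_div_le_interactionWeight_of_two_latNorm_lt hfar

def sectorPoint (L : ℕ) (x : Σ i : ℕ, Fin (i + L)) : ℤ × ℤ := ((x.1 + L : ℕ), (x.2 : ℕ))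

lemma sectorPoint_injective (L : ℕ) : Function.Injective (sectorPoint L) := by
  rintro ⟨i, b⟩ ⟨j, c⟩ h
  simp only [sectorPoint, Prod.mk.injEq, Nat.cast_inj] at h
  obtain ⟨hij, hbc⟩ := h
  obtain rfl : i = j := by omega
  obtain rfl : b = c := Fin.ext hbc
  rfl

lemma ofReal_div_le_sum_interactionWeight_sectorPoint {k : ℤ × ℤ} {L : ℕ}
    (hL : 2 * latNorm k < L) (i : ℕ) :
    ENNReal.ofReal (1 / 9 / (i + L : ℕ)) ≤ ∑ b : Fin (i + L),
      ENNReal.ofReal (interactionWeight (sectorPoint L ⟨i, b⟩) (k - sectorPoint L ⟨i, b⟩)) := by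
  have ha : 2 * latNorm k < (i + L : ℕ) := hL.trans_le (by simp)
  have ha0 : (0 : ℝ) < (i + L : ℕ) := by linarith [latNorm_nonneg k]
  calc ENNReal.ofReal (1 / 9 / (i + L : ℕ))
        = ∑ _b : Fin (i + L), ENNReal.ofReal (1 / (9 * ((i + L : ℕ) : ℝ) ^ 2)) := by
        rw [Finset.sum_const, Finset.card_univ, Fintype.card_fin, nsmul_eq_mul,
          ← ENNReal.ofReal_natCast, ← ENNReal.ofReal_mul ha0.le]
        congr 1
        field_simp
    _ ≤ _ := Finset.sum_le_sum fun b _ => ENNReal.ofReal_le_ofReal <| by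
        simpa [sectorPoint] using
          inv_nine_mul_sq_le_interactionWeight (m := sectorPoint L ⟨i, b⟩)
            (by simpa [sectorPoint] using ha) (by simp [sectorPoint])
            (by simp only [sectorPoint]; exact_mod_cast b.2)

lemma tsum_comp_le_tsum_interactionWeight {X : Type*} {k : ℤ × ℤ} {f : X → ℤ × ℤ}
    (hf : Function.Injective f) (hfar : ∀ x, 2 * latNorm k < latNorm (f x)) :
    ∑' x, ENNReal.ofReal (interactionWeight (f x) (k - f x)) ≤
      ∑' p : {p : (ℤ × ℤ) × (ℤ × ℤ) // p.1 ≠ 0 ∧ p.2 ≠ 0 ∧ p.1 + p.2 = k},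
        ENNReal.ofReal (interactionWeight p.1.1 p.1.2) := by
  let pair (x : X) : {p : (ℤ × ℤ) × (ℤ × ℤ) // p.1 ≠ 0 ∧ p.2 ≠ 0 ∧ p.1 + p.2 = k} :=
    ⟨(f x, k - f x), (ne_zero_and_sub_ne_zero_of_two_latNorm_lt (hfar x)).1,
      (ne_zero_and_sub_ne_zero_of_two_latNorm_lt (hfar x)).2, add_sub_cancel _ _⟩
  have hpair : Function.Injective pair := fun x y h => hf congr(($h).1.1)
  exact ENNReal.tsum_comp_le_tsum_of_injective hpair
    fun p => ENNReal.ofReal (interactionWeight p.1.1 p.1.2)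

theorem nonlinearity_not_absolutely_convergent_general (k : ℤ × ℤ) :
    (∑' p : {p : (ℤ × ℤ) × (ℤ × ℤ) // p.1 ≠ 0 ∧ p.2 ≠ 0 ∧ p.1 + p.2 = k},
      ENNReal.ofReal (|latDot p.1.1 p.1.2| / (latNorm p.1.1 ^ 2 * latNorm p.1.2 ^ 2)))
      = ∞ := by
  obtain ⟨L, hL⟩ := exists_nat_gt (2 * latNorm k)
  let w (x : Σ i : ℕ, Fin (i + L)) : ℝ≥0∞ :=
    ENNReal.ofReal (interactionWeight (sectorPoint L x) (k - sectorPoint L x))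
  refine top_unique ?_
  calc ∞ = ∑' i : ℕ, ENNReal.ofReal (1 / 9 / (i + L : ℕ)) :=
        (ENNReal.tsum_ofReal_div_natCast_add_eq_top (by norm_num) L).symm
    _ ≤ ∑' (i : ℕ) (b : Fin (i + L)), w ⟨i, b⟩ := ENNReal.tsum_le_tsum fun i =>
        (ofReal_div_le_sum_interactionWeight_sectorPoint hL i).trans_eq (tsum_fintype _).symm
    _ = ∑' x, w x := (ENNReal.tsum_sigma' w).symm
    _ ≤ _ := tsum_comp_le_tsum_interactionWeight (sectorPoint_injective L)
        fun x => lt_latNorm_of_lt_fst (hL.trans_le (by simp [sectorPoint]))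

/-- For every nonzero `k ∈ ℤ²`, the sum over nonzero `m + n = k` of
`|m·n| / (|m|² |n|²)` diverges. -/
theorem nonlinearity_not_absolutely_convergent (k : ℤ × ℤ) (hk : k ≠ 0) :
    (∑' p : {p : (ℤ × ℤ) × (ℤ × ℤ) // p.1 ≠ 0 ∧ p.2 ≠ 0 ∧ p.1 + p.2 = k},
      ENNReal.ofReal (|latDot p.1.1 p.1.2| / (latNorm p.1.1 ^ 2 * latNorm p.1.2 ^ 2)))
      = ∞ :=
  nonlinearity_not_absolutely_convergent_general k
end

section
/- Let k ∈ ℤ²\{0}, m₁ ∈ ℤ²\{0}, and let ℓ₂ ∈ ℤ². Then with the convention that all summation indices are nonzero lattice points, ∑_{h₁+ℓ₁=k} 1/(|h₁| |ℓ₁| |h₁−m₁|^{2−β} |ℓ₂−h₁+m₁|^{2−β}) ≤ C √(log(1+|k|)) / (|k| |ℓ₂|^{2−β}) for β ∈ (0,1), where C depends only on β, provided all the factors are over nonzero arguments (terms with a zero argument omitted). -/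
/-!
Write the summand as `f h * g h` with `f h = |h|⁻¹ |k - h|⁻¹` and
`g h = |h - m₁|^(-(2-β)) |ℓ₂ - h + m₁|^(-(2-β))`, and apply Cauchy–Schwarz. Both squared sums are
lattice convolutions `∑ g, |g|^(-s) |n - g|^(-s)`. Since one of `|g|`, `|n - g|` is at least
`|n| / 2`, such a convolution is at most `2 (2 / |n|)^s ∑_{g ≠ 0} |g|^(-s)`, which is finite for
`s = 4 - 2β > 2`. For `s = 2` the same splitting bounds the convolution by
`|k|^(-2) ∑_{0 < |g| ≤ |k|} |g|^(-2) + ∑_{|g| ≥ |k|} |g|^(-4) ≲ |k|^(-2) log |k| + |k|^(-2)`;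
both sums follow by counting the `8n` lattice points on each sphere of the sup norm.
-/

open scoped ENNReal

open Finset

lemma latNorm_add_le (a b : ℤ × ℤ) : latNorm (a + b) ≤ latNorm a + latNorm b := by
  have key (m : ℤ × ℤ) : latNorm m = ‖((m.1 : ℝ) + (m.2 : ℝ) * Complex.I : ℂ)‖ := by
    rw [Complex.norm_add_mul_I]; rfl
  rw [key, key, key, show (((a + b).1 : ℝ) : ℂ) + ((a + b).2 : ℝ) * Complex.I =
    ((a.1 : ℝ) + (a.2 : ℝ) * Complex.I) + ((b.1 : ℝ) + (b.2 : ℝ) * Complex.I) by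
      simp only [Prod.fst_add, Prod.snd_add]; push_cast; ring]
  exact norm_add_le _ _

lemma latNorm_le_add_latNorm_sub (k g : ℤ × ℤ) : latNorm k ≤ latNorm g + latNorm (k - g) := by
  simpa using latNorm_add_le g (k - g)

abbrev latMaxNorm (m : ℤ × ℤ) : ℕ := max m.1.natAbs m.2.natAbs

lemma latMaxNorm_pos {m : ℤ × ℤ} (hm : m ≠ 0) : 0 < latMaxNorm m := by
  have : m.1 ≠ 0 ∨ m.2 ≠ 0 := by contrapose! hm; exact Prod.ext hm.1 hm.2
  rcases this with h | h
  · exact lt_max_of_lt_left (Int.natAbs_pos.mpr h)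
  · exact lt_max_of_lt_right (Int.natAbs_pos.mpr h)

lemma latMaxNorm_le_latNorm (m : ℤ × ℤ) : (latMaxNorm m : ℝ) ≤ latNorm m := by
  refine Real.le_sqrt_of_sq_le ?_
  have h1 : ((m.1.natAbs : ℕ) : ℝ) ^ 2 = (m.1 : ℝ) ^ 2 := by simp [Nat.cast_natAbs, sq_abs]
  have h2 : ((m.2.natAbs : ℕ) : ℝ) ^ 2 = (m.2 : ℝ) ^ 2 := by simp [Nat.cast_natAbs, sq_abs]
  rcases le_total m.1.natAbs m.2.natAbs with h | h
  · rw [Nat.cast_max, max_eq_right (by exact_mod_cast h), h2]; nlinarith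
  · rw [Nat.cast_max, max_eq_left (by exact_mod_cast h), h1]; nlinarith

lemma latNorm_le_two_mul_latMaxNorm (m : ℤ × ℤ) : latNorm m ≤ 2 * latMaxNorm m := by
  have h1 : |(m.1 : ℝ)| ≤ latMaxNorm m := by simp [Nat.cast_natAbs]
  have h2 : |(m.2 : ℝ)| ≤ latMaxNorm m := by simp [Nat.cast_natAbs]
  refine Real.sqrt_le_iff.mpr ⟨by positivity, ?_⟩
  nlinarith [sq_abs (m.1 : ℝ), sq_abs (m.2 : ℝ), abs_nonneg (m.1 : ℝ), abs_nonneg (m.2 : ℝ)]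

lemma one_le_latNorm {m : ℤ × ℤ} (hm : m ≠ 0) : 1 ≤ latNorm m :=
  le_trans (by exact_mod_cast latMaxNorm_pos hm) (latMaxNorm_le_latNorm m)

lemma latNorm_pos {m : ℤ × ℤ} (hm : m ≠ 0) : 0 < latNorm m :=
  zero_lt_one.trans_le (one_le_latNorm hm)

noncomputable def latWeight (s : ℝ) (m : ℤ × ℤ) : ℝ≥0∞ :=
  if m = 0 then 0 else ENNReal.ofReal (latNorm m ^ (-s))

@[simp] lemma latWeight_zero (s : ℝ) : latWeight s 0 = 0 := if_pos rfl

lemma latWeight_of_ne_zero (s : ℝ) {m : ℤ × ℤ} (hm : m ≠ 0) :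
    latWeight s m = ENNReal.ofReal (latNorm m ^ (-s)) := if_neg hm

lemma latWeight_mul (s t : ℝ) (m : ℤ × ℤ) :
    latWeight s m * latWeight t m = latWeight (s + t) m := by
  rcases eq_or_ne m 0 with rfl | hm
  · simp
  rw [latWeight_of_ne_zero _ hm, latWeight_of_ne_zero _ hm, latWeight_of_ne_zero _ hm,
    ← ENNReal.ofReal_mul (Real.rpow_nonneg (latNorm_pos hm).le _), ← Real.rpow_add (latNorm_pos hm),
    neg_add]

lemma latWeight_sq (s : ℝ) (m : ℤ × ℤ) : latWeight s m ^ 2 = latWeight (2 * s) m := by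
  rw [sq, latWeight_mul, two_mul]

lemma latWeight_le_of_latNorm_le {s c : ℝ} (hs : 0 ≤ s) {m n : ℤ × ℤ} (hn : n ≠ 0)
    (hle : latNorm n ≤ c * latNorm m) :
    latWeight s m ≤ ENNReal.ofReal (c ^ s) * latWeight s n := by
  rcases eq_or_ne m 0 with rfl | hm
  · simp
  have hm' := latNorm_pos hm
  have hn' := latNorm_pos hn
  have hc : 0 < c := pos_of_mul_pos_left (hn'.trans_le hle) hm'.le
  rw [latWeight_of_ne_zero _ hm, latWeight_of_ne_zero _ hn, ← ENNReal.ofReal_mul (by positivity)]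
  refine ENNReal.ofReal_le_ofReal ?_
  rw [Real.rpow_neg hm'.le, Real.rpow_neg hn'.le, ← div_eq_mul_inv,
    inv_le_iff_one_le_mul₀ (by positivity), div_mul_eq_mul_div, le_div_iff₀ (by positivity),
    one_mul, ← Real.mul_rpow hc.le hm'.le]
  exact Real.rpow_le_rpow hn'.le hle hs

lemma latWeight_le_latMaxNorm_rpow {s : ℝ} (hs : 0 ≤ s) {m : ℤ × ℤ} (hm : m ≠ 0) :
    latWeight s m ≤ ENNReal.ofReal ((latMaxNorm m : ℝ) ^ (-s)) := by
  rw [latWeight_of_ne_zero _ hm]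
  exact ENNReal.ofReal_le_ofReal (Real.rpow_le_rpow_of_nonpos
    (by exact_mod_cast latMaxNorm_pos hm) (latMaxNorm_le_latNorm m) (neg_nonpos.mpr hs))

lemma tsum_comp_latMaxNorm (φ : ℕ → ℝ≥0∞) :
    ∑' m, φ (latMaxNorm m) = ∑' n, #(box n : Finset (ℤ × ℤ)) * φ n := by
  rw [← ENNReal.tsum_fiberwise _ latMaxNorm]
  congr 1; ext n
  have hfiber : latMaxNorm ⁻¹' {n} = ↑(box n : Finset (ℤ × ℤ)) := by ext; simp
  calc ∑' m : latMaxNorm ⁻¹' {n}, φ (latMaxNorm m) = ∑' _ : latMaxNorm ⁻¹' {n}, φ n :=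
        tsum_congr fun m ↦ congrArg φ m.2
    _ = #(box n : Finset (ℤ × ℤ)) * φ n := by
        rw [hfiber, Finset.tsum_subtype' (box n) fun _ ↦ φ n, sum_const, nsmul_eq_mul]

-- The sphere of radius `n ≥ 1` of the sup norm has `8 n` lattice points.
lemma tsum_le_of_le_latMaxNorm {f : ℤ × ℤ → ℝ≥0∞} (hf0 : f 0 = 0) {φ : ℕ → ℝ}
    (hf : ∀ m ≠ 0, f m ≤ ENNReal.ofReal (φ (latMaxNorm m))) :
    ∑' m, f m ≤ ∑' n : ℕ, ENNReal.ofReal (8 * n * φ n) := by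
  let ψ : ℕ → ℝ≥0∞ := fun n ↦ if n = 0 then 0 else ENNReal.ofReal (φ n)
  have hfψ : ∀ m, f m ≤ ψ (latMaxNorm m) := by
    intro m
    rcases eq_or_ne m 0 with rfl | hm
    · simp [hf0]
    · simpa [ψ, (latMaxNorm_pos hm).ne'] using hf m hm
  refine (ENNReal.tsum_le_tsum hfψ).trans_eq ?_
  rw [tsum_comp_latMaxNorm]
  congr 1; ext n
  rcases eq_or_ne n 0 with rfl | hn
  · simp [ψ]
  · rw [Int.card_box hn, ENNReal.ofReal_mul (by positivity)]
    simp [ψ, hn]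

lemma tsum_latWeight_ne_top {s : ℝ} (hs : 2 < s) : ∑' m, latWeight s m ≠ ⊤ := by
  refine ne_top_of_le_ne_top ?_ (tsum_le_of_le_latMaxNorm (latWeight_zero s)
    (φ := fun n ↦ (n : ℝ) ^ (-s)) fun m hm ↦ latWeight_le_latMaxNorm_rpow (by linarith) hm)
  have hφ : ∀ n : ℕ, 8 * (n : ℝ) * (n : ℝ) ^ (-s) = 8 * (n : ℝ) ^ (1 + -s) := fun n ↦ by
    rw [Real.rpow_one_add' n.cast_nonneg (by linarith), mul_assoc]
  simp_rw [hφ]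
  rw [← ENNReal.ofReal_tsum_of_nonneg (fun n ↦ by positivity)
    ((Real.summable_nat_rpow.mpr (by linarith)).mul_left 8)]
  exact ENNReal.ofReal_ne_top

lemma tsum_latWeight_two_ball_le {R : ℝ} (hR : 1 ≤ R) :
    ∑' m, (if latNorm m ≤ R then latWeight 2 m else 0) ≤ ENNReal.ofReal (8 * (1 + Real.log R)) := by
  let φ : ℕ → ℝ := fun n ↦ if (n : ℝ) ≤ R then (n : ℝ) ^ (-(2 : ℝ)) else 0
  have hf : ∀ m ≠ (0 : ℤ × ℤ), (if latNorm m ≤ R then latWeight 2 m else 0)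
      ≤ ENNReal.ofReal (φ (latMaxNorm m)) := by
    intro m hm
    split_ifs with h
    · simpa only [φ, if_pos ((latMaxNorm_le_latNorm m).trans h)] using
        latWeight_le_latMaxNorm_rpow zero_le_two hm
    · exact zero_le
  refine (tsum_le_of_le_latMaxNorm (by simp) hf).trans ?_
  have hsupp : ∀ n ∉ Icc 1 ⌊R⌋₊, ENNReal.ofReal (8 * n * φ n) = 0 := by
    intro n hn
    rw [mem_Icc, not_and_or, not_le, Nat.lt_one_iff, not_le, Nat.floor_lt (by linarith)] at hn
    rcases hn with rfl | hn
    · simp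
    · simp [φ, not_le.mpr hn]
  have hterm : ∀ n ∈ Icc 1 ⌊R⌋₊, 8 * (n : ℝ) * φ n = 8 * (n : ℝ)⁻¹ := by
    intro n hn
    have hn1 : (1 : ℝ) ≤ n := by exact_mod_cast (mem_Icc.mp hn).1
    have hnR : (n : ℝ) ≤ R := (Nat.le_floor_iff (by linarith)).mp (mem_Icc.mp hn).2
    simp only [φ, if_pos hnR, Real.rpow_neg n.cast_nonneg, Real.rpow_two]
    field_simp
  rw [tsum_eq_sum hsupp, ← ENNReal.ofReal_sum_of_nonneg fun n _ ↦ by positivity]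
  refine ENNReal.ofReal_le_ofReal ?_
  rw [sum_congr rfl hterm, ← mul_sum]
  have hharmonic : ∑ n ∈ Icc 1 ⌊R⌋₊, (n : ℝ)⁻¹ ≤ 1 + Real.log ⌊R⌋₊ := by
    simpa [harmonic_eq_sum_Icc] using harmonic_le_one_add_log ⌊R⌋₊
  have hlog : Real.log ⌊R⌋₊ ≤ Real.log R :=
    Real.log_le_log (by exact_mod_cast Nat.floor_pos.mpr hR) (Nat.floor_le (by linarith))
  linarith

lemma sum_Ico_inv_pow_three_le {c : ℕ} (hc : 0 < c) (N : ℕ) :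
    ∑ n ∈ Ico c N, ((n : ℝ) ^ 3)⁻¹ ≤ 2 / c ^ 2 := by
  have hIco : Ico c N = Ioo (c - 1) N := by ext; simp; omega
  calc ∑ n ∈ Ico c N, ((n : ℝ) ^ 3)⁻¹ ≤ ∑ n ∈ Ico c N, (c : ℝ)⁻¹ * ((n : ℝ) ^ 2)⁻¹ := by
        refine sum_le_sum fun n hn ↦ ?_
        have hcn : (c : ℝ) ≤ n := by exact_mod_cast (mem_Ico.mp hn).1
        have hc' : (0 : ℝ) < c := by exact_mod_cast hc
        have hn' : (0 : ℝ) < n := hc'.trans_le hcn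
        rw [← mul_inv, pow_succ', inv_le_inv₀ (by positivity) (by positivity)]
        gcongr
    _ ≤ (c : ℝ)⁻¹ * (2 / c) := by
        rw [← mul_sum, hIco]
        gcongr
        simpa [Nat.cast_sub hc, hc] using sum_Ioo_inv_sq_le (α := ℝ) (c - 1) N
    _ = 2 / c ^ 2 := by ring

lemma tsum_latWeight_four_tail_le {R : ℝ} (hR : 0 < R) :
    ∑' m, (if R ≤ latNorm m then latWeight 4 m else 0) ≤ ENNReal.ofReal (64 * R ^ (-(2 : ℝ))) := by
  set c := ⌈R / 2⌉₊ with hc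
  have hc0 : 0 < c := Nat.ceil_pos.mpr (by positivity)
  have hRc : R / 2 ≤ c := Nat.le_ceil _
  let φ : ℕ → ℝ := fun n ↦ if c ≤ n then (n : ℝ) ^ (-(4 : ℝ)) else 0
  have hf : ∀ m ≠ (0 : ℤ × ℤ), (if R ≤ latNorm m then latWeight 4 m else 0)
      ≤ ENNReal.ofReal (φ (latMaxNorm m)) := by
    intro m hm
    split_ifs with h
    · have : c ≤ latMaxNorm m :=
        Nat.ceil_le.mpr (by linarith [latNorm_le_two_mul_latMaxNorm m])
      simpa only [φ, if_pos this] using latWeight_le_latMaxNorm_rpow zero_le_four hm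
    · exact zero_le
  refine (tsum_le_of_le_latMaxNorm (by simp) hf).trans (ENNReal.tsum_le_of_sum_range_le fun N ↦ ?_)
  rw [← ENNReal.ofReal_sum_of_nonneg fun n _ ↦ by positivity]
  refine ENNReal.ofReal_le_ofReal ?_
  calc ∑ n ∈ range N, 8 * (n : ℝ) * φ n = 8 * ∑ n ∈ Ico c N, ((n : ℝ) ^ 3)⁻¹ := by
        have hterm : ∀ n ∈ range N,
            8 * (n : ℝ) * φ n = if c ≤ n then 8 * ((n : ℝ) ^ 3)⁻¹ else 0 := by
          intro n _
          simp only [φ]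
          split_ifs with hn
          · have hn' : (0 : ℝ) < n := by exact_mod_cast hc0.trans_le hn
            rw [Real.rpow_neg hn'.le]
            norm_cast
            field_simp
            push_cast
            ring
          · rw [mul_zero]
        have hfilter : (range N).filter (c ≤ ·) = Ico c N := by ext; simp; omega
        rw [sum_congr rfl hterm, ← sum_filter, hfilter, mul_sum]
    _ ≤ 8 * (2 / c ^ 2) := by gcongr; exact sum_Ico_inv_pow_three_le hc0 N
    _ = 16 / (c : ℝ) ^ 2 := by ring
    _ ≤ 16 / (R ^ 2 / 4) := div_le_div_of_nonneg_left (by norm_num) (by positivity) (by nlinarith)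
    _ = 64 * R ^ (-(2 : ℝ)) := by rw [Real.rpow_neg hR.le, Real.rpow_two]; ring

lemma tsum_mul_sub_le_two_mul_tsum {α : Type*} [AddCommGroup α] {f G : α → ℝ≥0∞} (r : α → ℝ)
    (k : α) (hfG : ∀ g, r g ≤ r (k - g) → f g * f (k - g) ≤ G g) :
    ∑' g, f g * f (k - g) ≤ 2 * ∑' g, G g := by
  have hpt : ∀ g, f g * f (k - g) ≤ G g + G (k - g) := by
    intro g
    rcases le_total (r g) (r (k - g)) with hg | hg
    · exact (hfG g hg).trans le_self_add
    · have := hfG (k - g) (by rwa [sub_sub_cancel])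
      rw [sub_sub_cancel, mul_comm] at this
      exact this.trans le_add_self
  calc ∑' g, f g * f (k - g) ≤ ∑' g, (G g + G (k - g)) := ENNReal.tsum_le_tsum hpt
    _ = 2 * ∑' g, G g := by
      rw [ENNReal.tsum_add, two_mul]
      exact congrArg _ ((Equiv.subLeft k).tsum_eq G)

lemma latWeight_mul_sub_le {s : ℝ} (hs : 0 ≤ s) {n g : ℤ × ℤ} (hn : n ≠ 0)
    (hg : latNorm g ≤ latNorm (n - g)) :
    latWeight s g * latWeight s (n - g)
      ≤ ENNReal.ofReal (2 ^ s) * latWeight s n * latWeight s g := by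
  rw [mul_comm _ (latWeight s g)]
  gcongr
  exact latWeight_le_of_latNorm_le hs hn (by linarith [latNorm_le_add_latNorm_sub n g])

lemma tsum_latWeight_mul_sub_le {s : ℝ} (hs : 0 ≤ s) {n : ℤ × ℤ} (hn : n ≠ 0) :
    ∑' g, latWeight s g * latWeight s (n - g)
      ≤ 2 * ENNReal.ofReal (2 ^ s) * latWeight s n * ∑' g, latWeight s g := by
  refine (tsum_mul_sub_le_two_mul_tsum (G := fun g ↦ ENNReal.ofReal (2 ^ s) * latWeight s n *
    latWeight s g) latNorm n fun g hg ↦ latWeight_mul_sub_le hs hn hg).trans_eq ?_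
  rw [ENNReal.tsum_mul_left, mul_assoc, mul_assoc, mul_assoc]

lemma latWeight_two_mul_sub_le {k g : ℤ × ℤ} (hk : k ≠ 0) (hg : latNorm g ≤ latNorm (k - g)) :
    latWeight 2 g * latWeight 2 (k - g)
      ≤ 4 * latWeight 2 k * (if latNorm g ≤ latNorm k then latWeight 2 g else 0)
        + (if latNorm k ≤ latNorm g then latWeight 4 g else 0) := by
  rcases eq_or_ne g 0 with rfl | hg0
  · simp
  by_cases hgk : latNorm g ≤ latNorm k
  · rw [if_pos hgk]
    refine le_add_right ?_
    calc latWeight 2 g * latWeight 2 (k - g)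
        ≤ latWeight 2 g * (ENNReal.ofReal (2 ^ (2 : ℝ)) * latWeight 2 k) := by
          gcongr
          exact latWeight_le_of_latNorm_le zero_le_two hk
            (by linarith [latNorm_le_add_latNorm_sub k g])
      _ = 4 * latWeight 2 k * latWeight 2 g := by norm_num; ring
  · rw [if_neg hgk, if_pos (le_of_not_ge hgk), mul_zero, zero_add]
    calc latWeight 2 g * latWeight 2 (k - g)
        ≤ latWeight 2 g * (ENNReal.ofReal (1 ^ (2 : ℝ)) * latWeight 2 g) := by
          gcongr
          exact latWeight_le_of_latNorm_le zero_le_two hg0 (by linarith)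
      _ = latWeight 4 g := by norm_num [latWeight_mul]

lemma tsum_latWeight_two_mul_sub_le {k : ℤ × ℤ} (hk : k ≠ 0) :
    ∑' g, latWeight 2 g * latWeight 2 (k - g)
      ≤ ENNReal.ofReal (64 * (3 / Real.log 2 + 1) * Real.log (1 + latNorm k) *
          latNorm k ^ (-(2 : ℝ))) := by
  set K := latNorm k
  have hK : 1 ≤ K := one_le_latNorm hk
  have hlogK : 0 ≤ Real.log K := Real.log_nonneg hK
  have hlog2 : 0 < Real.log 2 := Real.log_pos one_lt_two
  have hlog : 3 + Real.log K ≤ (3 / Real.log 2 + 1) * Real.log (1 + K) := by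
    have h2 : Real.log 2 ≤ Real.log (1 + K) := Real.log_le_log two_pos (by linarith)
    have hK' : Real.log K ≤ Real.log (1 + K) := Real.log_le_log (by linarith) (by linarith)
    have : 3 ≤ 3 / Real.log 2 * Real.log (1 + K) := by
      rw [div_mul_eq_mul_div, le_div_iff₀ hlog2]; linarith
    linarith
  calc ∑' g, latWeight 2 g * latWeight 2 (k - g)
      ≤ 2 * ∑' g, (4 * latWeight 2 k * (if latNorm g ≤ K then latWeight 2 g else 0)
        + (if K ≤ latNorm g then latWeight 4 g else 0)) :=
        tsum_mul_sub_le_two_mul_tsum latNorm k fun g hg ↦ latWeight_two_mul_sub_le hk hg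
    _ ≤ 2 * (4 * latWeight 2 k * ENNReal.ofReal (8 * (1 + Real.log K))
        + ENNReal.ofReal (64 * K ^ (-(2 : ℝ)))) := by
        rw [ENNReal.tsum_add, ENNReal.tsum_mul_left]
        gcongr
        · exact tsum_latWeight_two_ball_le hK
        · exact tsum_latWeight_four_tail_le (by linarith)
    _ = ENNReal.ofReal (64 * (3 + Real.log K) * K ^ (-(2 : ℝ))) := by
        have hK2 : 0 ≤ K ^ (-(2 : ℝ)) := Real.rpow_nonneg (by linarith) _
        rw [latWeight_of_ne_zero _ hk,
          ← ENNReal.ofReal_ofNat 4, ← ENNReal.ofReal_mul (by norm_num),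
          ← ENNReal.ofReal_mul (by positivity),
          ← ENNReal.ofReal_add (by positivity) (by positivity),
          ← ENNReal.ofReal_ofNat 2, ← ENNReal.ofReal_mul (by norm_num)]
        congr 1
        ring
    _ ≤ ENNReal.ofReal (64 * (3 / Real.log 2 + 1) * Real.log (1 + K) * K ^ (-(2 : ℝ))) := by
        gcongr ENNReal.ofReal (?_ * _)
        rw [mul_assoc]
        exact mul_le_mul_of_nonneg_left hlog (by norm_num)

lemma exists_tsum_latWeight_mul_sub_le {s : ℝ} (hs : 2 < s) :
    ∃ B > 0, ∀ n ≠ (0 : ℤ × ℤ),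
      ∑' g, latWeight s g * latWeight s (n - g) ≤ ENNReal.ofReal (B * latNorm n ^ (-s)) := by
  set S := ∑' g, latWeight s g with hSdef
  have hS : S ≠ ⊤ := tsum_latWeight_ne_top hs
  have hS0 : S ≠ 0 := fun h ↦ by
    simpa [latWeight_of_ne_zero, latNorm] using ENNReal.tsum_eq_zero.mp h (1, 0)
  have := ENNReal.toReal_pos hS0 hS
  refine ⟨2 * 2 ^ s * S.toReal, by positivity, fun n hn ↦ ?_⟩
  refine (tsum_latWeight_mul_sub_le (by linarith) hn).trans_eq ?_
  have := latNorm_pos hn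
  rw [← hSdef, latWeight_of_ne_zero _ hn]
  nth_rw 1 [← ENNReal.ofReal_toReal hS]
  rw [← ENNReal.ofReal_ofNat 2,
    ← ENNReal.ofReal_mul (by norm_num), ← ENNReal.ofReal_mul (by positivity),
    ← ENNReal.ofReal_mul (by positivity), mul_right_comm]

lemma ENNReal.tsum_mul_le_ofReal_sqrt_mul_sqrt {ι : Type*} {f g : ι → ℝ≥0∞} {a b : ℝ}
    (ha : 0 ≤ a) (hb : 0 ≤ b) (hf : ∑' i, f i ^ 2 ≤ ENNReal.ofReal a)
    (hg : ∑' i, g i ^ 2 ≤ ENNReal.ofReal b) :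
    ∑' i, f i * g i ≤ ENNReal.ofReal (√a * √b) := by
  let _ : MeasurableSpace ι := ⊤
  have hCS := ENNReal.lintegral_mul_le_Lp_mul_Lq MeasureTheory.Measure.count
    Real.HolderConjugate.two_two (measurable_from_top (f := f)).aemeasurable
    (measurable_from_top (f := g)).aemeasurable
  simp only [MeasureTheory.lintegral_count, Pi.mul_apply, ENNReal.rpow_two] at hCS
  calc ∑' i, f i * g i ≤ (∑' i, f i ^ 2) ^ (1 / 2 : ℝ) * (∑' i, g i ^ 2) ^ (1 / 2 : ℝ) := hCS
    _ ≤ ENNReal.ofReal a ^ (1 / 2 : ℝ) * ENNReal.ofReal b ^ (1 / 2 : ℝ) := by gcongr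
    _ = ENNReal.ofReal (√a * √b) := by
      rw [ENNReal.ofReal_rpow_of_nonneg ha (by norm_num),
        ENNReal.ofReal_rpow_of_nonneg hb (by norm_num),
        ← ENNReal.ofReal_mul (by positivity), Real.sqrt_eq_rpow, Real.sqrt_eq_rpow]

lemma tsum_subtype_eq_tsum_latWeight (k m ℓ : ℤ × ℤ) (p : ℝ) :
    ∑' h : {h : ℤ × ℤ // h ≠ 0 ∧ k - h ≠ 0 ∧ h - m ≠ 0 ∧ ℓ - h + m ≠ 0},
      ENNReal.ofReal (1 / (latNorm h.1 * latNorm (k - h.1) *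
        latNorm (h.1 - m) ^ p * latNorm (ℓ - h.1 + m) ^ p))
      = ∑' h, latWeight 1 h * latWeight 1 (k - h) *
          (latWeight p (h - m) * latWeight p (ℓ - (h - m))) := by
  have hℓ (h : ℤ × ℤ) : ℓ - (h - m) = ℓ - h + m := by abel
  simp_rw [hℓ]
  rw [← tsum_subtype_eq_of_support_subset
    (s := {h | h ≠ 0 ∧ k - h ≠ 0 ∧ h - m ≠ 0 ∧ ℓ - h + m ≠ 0})]
  · refine tsum_congr fun ⟨h, h₁, h₂, h₃, h₄⟩ ↦ ?_
    have := latNorm_pos h₁; have := latNorm_pos h₂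
    have := latNorm_pos h₃; have := latNorm_pos h₄
    rw [latWeight_of_ne_zero _ h₁, latWeight_of_ne_zero _ h₂, latWeight_of_ne_zero _ h₃,
      latWeight_of_ne_zero _ h₄, Real.rpow_neg_one, Real.rpow_neg_one,
      Real.rpow_neg (by positivity), Real.rpow_neg (by positivity), ← ENNReal.ofReal_mul (by positivity),
      ← ENNReal.ofReal_mul (by positivity), ← ENNReal.ofReal_mul (by positivity)]
    congr 1
    field_simp
  · intro h hh
    contrapose! hh
    simp only [Set.mem_ofPred_eq, not_and_or, not_not] at hh
    rcases hh with h0 | h0 | h0 | h0 <;> simp [h0]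

/-- Cauchy–Schwarz lattice sum estimate: for `β ∈ (0,1)` there is `C` such that for
all nonzero `k, m₁, ℓ₂ ∈ ℤ²`,
`∑_{h₁+ℓ₁=k} |h₁|⁻¹|ℓ₁|⁻¹ |h₁-m₁|^{-(2-β)} |ℓ₂-h₁+m₁|^{-(2-β)}
  ≤ C √(log(1+|k|)) / (|k| |ℓ₂|^{2-β})`,
the sum being over those `h₁` for which all four arguments are nonzero. -/
theorem cauchy_schwarz_lattice_sum_estimate (β : ℝ) (hβ : β ∈ Set.Ioo (0:ℝ) 1) :
    ∃ C : ℝ, 0 < C ∧ ∀ k m₁ ℓ₂ : ℤ × ℤ, k ≠ 0 → m₁ ≠ 0 → ℓ₂ ≠ 0 →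
      (∑' h₁ : {h : ℤ × ℤ //
          h ≠ 0 ∧ k - h ≠ 0 ∧ h - m₁ ≠ 0 ∧ ℓ₂ - h + m₁ ≠ 0},
        ENNReal.ofReal
          (1 / (latNorm h₁.1 * latNorm (k - h₁.1) *
            latNorm (h₁.1 - m₁) ^ (2 - β) * latNorm (ℓ₂ - h₁.1 + m₁) ^ (2 - β))))
        ≤ ENNReal.ofReal
            (C * Real.sqrt (Real.log (1 + latNorm k)) /
              (latNorm k * latNorm ℓ₂ ^ (2 - β))) := by
  set p := 2 - β
  obtain ⟨B, hB, hconv⟩ := exists_tsum_latWeight_mul_sub_le (s := 2 * p) (by linarith [hβ.2])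
  set A := 64 * (3 / Real.log 2 + 1)
  have hA : 0 < A := by have := Real.log_pos one_lt_two; positivity
  refine ⟨√A * √B, by positivity, fun k m ℓ hk _ hℓ ↦ ?_⟩
  set K := latNorm k
  set N := latNorm ℓ
  have hK := latNorm_pos hk
  have hN := latNorm_pos hℓ
  have hL : 0 ≤ Real.log (1 + K) := Real.log_nonneg (by linarith)
  rw [tsum_subtype_eq_tsum_latWeight]
  refine (ENNReal.tsum_mul_le_ofReal_sqrt_mul_sqrt (a := A * Real.log (1 + K) * K ^ (-(2 : ℝ)))
    (b := B * N ^ (-(2 * p))) (by positivity) (by positivity) ?_ ?_).trans_eq (congrArg _ ?_)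
  · simpa only [mul_pow, latWeight_sq, mul_one] using tsum_latWeight_two_mul_sub_le hk
  · simp_rw [mul_pow, latWeight_sq]
    exact ((Equiv.subRight m).tsum_eq fun g ↦ latWeight (2 * p) g * latWeight (2 * p) (ℓ - g)
      ).trans_le (hconv ℓ hℓ)
  · have hK2 : √(K ^ (-(2 : ℝ))) = K⁻¹ := by
      rw [Real.rpow_neg hK.le, Real.rpow_two, Real.sqrt_inv, Real.sqrt_sq hK.le]
    have hN2 : √(N ^ (-(2 * p))) = (N ^ p)⁻¹ := by
      rw [Real.rpow_neg hN.le, mul_comm, Real.rpow_mul hN.le, Real.rpow_two, Real.sqrt_inv,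
        Real.sqrt_sq (by positivity)]
    rw [Real.sqrt_mul (mul_nonneg hA.le hL), Real.sqrt_mul hA.le, Real.sqrt_mul hB.le, hK2, hN2]
    field_simp
end
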